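/- For every D ⊆ E admitting a d-flow and every e ∈ E: the first two defining cases of ψ_e are mutually exclusive (so ψ_e is well defined); ψ_e(D) admits a d-flow with A(ψ_e(D)) = A(D); ψ_e(D) contains either both or neither of e and rev e; and ψ_e(D) ∖ {e, rev e} = D ∖ {e, rev e}. -/

import Mathlib

open Finset

section Defs

variable {V : Type*}

/-- Reversal of a directed edge. -/
def drev (e : V × V) : V × V := (e.2, e.1)

/-- `K` is a subgraph of the (symmetric) edge set `E`: it contains either both or
neither of `e` and `drev e` for every `e ∈ E`. -/
def IsSubgraph [DecidableEq V] (E K : Finset (V × V)) : Prop :=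
  K ⊆ E ∧ ∀ e ∈ E, (e ∈ K ↔ drev e ∈ K)

/-- `L` is an orientation of the (symmetric) edge set `E`: it contains exactly one of
`e` and `drev e` for every `e ∈ E`. -/
def IsOrientation [DecidableEq V] (E L : Finset (V × V)) : Prop :=
  L ⊆ E ∧ ∀ e ∈ E, (e ∈ L ↔ drev e ∉ L)

variable [Fintype V] [DecidableEq V]

/-- `f` is a `d`-flow on the directed subgraph `D` of the graph with edge set `E`. -/
def IsFlow (E D : Finset (V × V)) (d : V → ℤ) (f : V × V → ℝ) : Prop :=
  (∀ e ∈ E, 0 ≤ f e ∧ f e ≤ 1) ∧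
  (∀ e, e ∉ D → f e = 0) ∧
  ∀ u : V,
    ((Finset.univ.filter (fun v : V => (u, v) ∈ E)).sum fun v => f (u, v)) -
      ((Finset.univ.filter (fun v : V => (v, u) ∈ E)).sum fun v => f (v, u)) = (d u : ℝ)

/-- A `d`-flow exists on `D`. -/
def AdmitsFlow (E D : Finset (V × V)) (d : V → ℤ) : Prop :=
  ∃ f : V × V → ℝ, IsFlow E D d f

/-- The `w`-cost of a flow `f`. -/
def flowCost (E : Finset (V × V)) (w : V × V → ℝ) (f : V × V → ℝ) : ℝ :=
  ∑ e ∈ E, w e * f e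

/-- `f` is a min-cost `d`-flow on `D`. -/
def IsMinCostFlow (E D : Finset (V × V)) (d : V → ℤ) (w : V × V → ℝ)
    (f : V × V → ℝ) : Prop :=
  IsFlow E D d f ∧ ∀ g : V × V → ℝ, IsFlow E D d g → flowCost E w f ≤ flowCost E w g

/-- The `{0,1}`-valued function determined by a set of edges. -/
def ind (S : Finset (V × V)) : V × V → ℝ := fun e => if e ∈ S then 1 else 0

/-- `A` assigns to every flow-admitting `D ⊆ E` the (edge set of the) unique,
`{0,1}`-valued min-cost `d`-flow on `D`. -/
def GoodA (E : Finset (V × V)) (d : V → ℤ) (w : V × V → ℝ)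
    (A : Finset (V × V) → Finset (V × V)) : Prop :=
  ∀ D : Finset (V × V), D ⊆ E → AdmitsFlow E D d →
    IsMinCostFlow E D d w (ind (A D)) ∧
    ∀ f : V × V → ℝ, IsMinCostFlow E D d w f → f = ind (A D)

/-- `A(D) = A(D')`: both `D` and `D'` admit a `d`-flow and their unique min-cost
`d`-flows coincide.  (If one of them admits no `d`-flow this is false.) -/
def AEq (E : Finset (V × V)) (d : V → ℤ) (A : Finset (V × V) → Finset (V × V))
    (D D' : Finset (V × V)) : Prop :=
  AdmitsFlow E D d ∧ AdmitsFlow E D' d ∧ A D = A D'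

/-- `D ⊕ e := (D ∪ {e}) \ {drev e}`. -/
def oplus (D : Finset (V × V)) (e : V × V) : Finset (V × V) := insert e D \ {drev e}

/-- `D + e := D ∪ {e, drev e}`. -/
def padd (D : Finset (V × V)) (e : V × V) : Finset (V × V) := D ∪ {e, drev e}

/-- `D − e := D \ {e, drev e}`. -/
def psub (D : Finset (V × V)) (e : V × V) : Finset (V × V) := D \ {e, drev e}

/-- The representative of `{e, drev e}` lying in the reference orientation `E'`. -/
def chi (E' : Finset (V × V)) (e : V × V) : V × V := if e ∈ E' then e else drev e

/-- The map `φ_e`. -/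
noncomputable def phiE (E : Finset (V × V)) (d : V → ℤ)
    (A : Finset (V × V) → Finset (V × V)) (E' : Finset (V × V))
    (e : V × V) (D : Finset (V × V)) : Finset (V × V) := by
  classical
  exact
    if ¬ AEq E d A D (oplus D e) then oplus D (drev e)
    else if ¬ AEq E d A D (oplus D (drev e)) then oplus D e
    else if e ∈ D then oplus D (chi E' e) else oplus D (drev (chi E' e))

/-- The map `ψ_e`. -/
noncomputable def psiE (E : Finset (V × V)) (d : V → ℤ)
    (A : Finset (V × V) → Finset (V × V)) (E' : Finset (V × V))
    (e : V × V) (D : Finset (V × V)) : Finset (V × V) := by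
  classical
  exact
    if ¬ AEq E d A D (padd D e) then psub D e
    else if ¬ AEq E d A D (psub D e) then padd D e
    else if chi E' e ∈ D then padd D e else psub D e

end Defs

/-!
If the min-cost flow `f = A(D)` uses neither `e` nor `drev e`, it is also the min-cost flow
on `D - e`. Otherwise `f` uses some `a ∈ {e, drev e}`, and no flow `g` on `D + e` is cheaper:
if `drev a ∈ D` then `g` is already a flow on `D`; if not, `f (drev a) = 0`, so the midpoint
of `f` and `g` carries at least as much on `a` as on `drev a`, and cancelling the 2-cycle
`a, drev a` there leaves a flow on `D` that would be cheaper than `f` if `g` were. Hence `f` is also min-cost on `D + e`.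
In either case `A(D)` agrees with `A(D + e)` or `A(D - e)`, and `ψ_e` picks one of them.
-/

section

variable {V : Type*}

lemma drev_drev (e : V × V) : drev (drev e) = e := rfl

lemma ne_drev_of_fst_ne_snd {e : V × V} (h : e.1 ≠ e.2) : e ≠ drev e :=
  fun h' => h (congrArg Prod.fst h')

section Cost

variable {E : Finset (V × V)} {w : V × V → ℝ}

lemma flowCost_add (f g : V × V → ℝ) :
    flowCost E w (f + g) = flowCost E w f + flowCost E w g := by
  simp only [flowCost, Pi.add_apply, mul_add, sum_add_distrib]

lemma flowCost_sub (f g : V × V → ℝ) :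
    flowCost E w (f - g) = flowCost E w f - flowCost E w g := by
  simp only [flowCost, Pi.sub_apply, mul_sub, sum_sub_distrib]

lemma flowCost_smul (c : ℝ) (f : V × V → ℝ) :
    flowCost E w (c • f) = c * flowCost E w f := by
  simp only [flowCost, Pi.smul_apply, smul_eq_mul, mul_sum]
  exact sum_congr rfl fun _ _ => by ring

variable [DecidableEq V]

def twoCycle (a : V × V) : V × V → ℝ := Pi.single a 1 + Pi.single (drev a) 1

lemma flowCost_twoCycle {a : V × V} (ha : a ∈ E) (ha' : drev a ∈ E) :
    flowCost E w (twoCycle a) = w a + w (drev a) := by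
  simp [flowCost, twoCycle, Pi.single_apply, mul_add, sum_add_distrib, ha, ha']

end Cost

variable [DecidableEq V]

lemma padd_drev (D : Finset (V × V)) (e : V × V) : padd D (drev e) = padd D e := by
  rw [padd, padd, drev_drev, pair_comm]

lemma psub_padd (D : Finset (V × V)) (e : V × V) : psub (padd D e) e = psub D e :=
  union_sdiff_right _ _

lemma psub_psub (D : Finset (V × V)) (e : V × V) : psub (psub D e) e = psub D e :=
  sdiff_idem _ _

lemma ind_injective : Function.Injective (ind : Finset (V × V) → V × V → ℝ) := by
  intro S T h
  ext x
  have hx := congrFun h x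
  simp only [ind] at hx
  split_ifs at hx <;> simp_all

lemma ind_eq_zero_or_eq_one (S : Finset (V × V)) (x : V × V) : ind S x = 0 ∨ ind S x = 1 := by
  unfold ind
  split_ifs <;> simp

section Flows

variable [Fintype V] {E D D' : Finset (V × V)} {d : V → ℤ} {w : V × V → ℝ}
  {f g : V × V → ℝ}

def netOutflow (E : Finset (V × V)) (u : V) : (V × V → ℝ) →ₗ[ℝ] ℝ where
  toFun f := (∑ v ∈ univ.filter (fun v => (u, v) ∈ E), f (u, v)) -
    ∑ v ∈ univ.filter (fun v => (v, u) ∈ E), f (v, u)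
  map_add' f g := by simp only [Pi.add_apply, sum_add_distrib]; ring
  map_smul' c f := by simp only [Pi.smul_apply, smul_eq_mul, ← mul_sum, RingHom.id_apply]; ring

lemma isFlow_iff : IsFlow E D d f ↔
    (∀ e ∈ E, 0 ≤ f e ∧ f e ≤ 1) ∧ (∀ e, e ∉ D → f e = 0) ∧ ∀ u, netOutflow E u f = d u :=
  Iff.rfl

lemma IsFlow.netOutflow_eq (hf : IsFlow E D d f) (u : V) : netOutflow E u f = d u :=
  hf.2.2 u

lemma netOutflow_single {a : V × V} (ha : a ∈ E) (t : ℝ) (u : V) :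
    netOutflow E u (Pi.single a t) = (if u = a.1 then t else 0) - (if u = a.2 then t else 0) := by
  obtain ⟨a₁, a₂⟩ := a
  simp only [netOutflow, LinearMap.coe_mk, AddHom.coe_mk, Pi.single_apply, Prod.mk.injEq]
  congr 1
  · by_cases hu : u = a₁
    · subst hu; simp [sum_ite_eq', ha]
    · simp [hu]
  · by_cases hu : u = a₂
    · subst hu; simp [sum_ite_eq', ha]
    · simp [hu]

lemma netOutflow_twoCycle {a : V × V} (ha : a ∈ E) (ha' : drev a ∈ E) (u : V) :
    netOutflow E u (twoCycle a) = 0 := by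
  rw [twoCycle, map_add, netOutflow_single ha, netOutflow_single ha']
  simp only [drev]
  split_ifs <;> simp_all

lemma convex_setOf_isFlow : Convex ℝ {f | IsFlow E D d f} := by
  intro f hf g hg a b ha hb hab
  refine isFlow_iff.2 ⟨fun x hx => ?_, fun x hx => ?_, fun u => ?_⟩
  · obtain ⟨hf0, hf1⟩ := hf.1 x hx
    obtain ⟨hg0, hg1⟩ := hg.1 x hx
    simp only [Pi.add_apply, Pi.smul_apply, smul_eq_mul]
    constructor <;> nlinarith
  · simp [hf.2.1 x hx, hg.2.1 x hx]
  · rw [map_add, map_smul, map_smul, hf.netOutflow_eq u, hg.netOutflow_eq u, smul_eq_mul,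
      smul_eq_mul, ← add_mul, hab, one_mul]

lemma IsFlow.mono (hf : IsFlow E D d f) (h : D ⊆ D') : IsFlow E D' d f :=
  ⟨hf.1, fun x hx => hf.2.1 x fun hxD => hx (h hxD), hf.2.2⟩

lemma IsFlow.restrict (hf : IsFlow E D d f) (h : ∀ x ∈ D, x ∉ D' → f x = 0) :
    IsFlow E D' d f := by
  refine ⟨hf.1, fun x hx => ?_, hf.2.2⟩
  by_cases hxD : x ∈ D
  · exact h x hxD hx
  · exact hf.2.1 x hxD

lemma IsFlow.sub_smul_twoCycle (hf : IsFlow E D d f) {a : V × V} (ha : a ∈ E)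
    (ha' : drev a ∈ E) (hne : a ≠ drev a) {t : ℝ} (ht : 0 ≤ t) (hta : t ≤ f a)
    (hta' : t ≤ f (drev a)) : IsFlow E D d (f - t • twoCycle a) := by
  have happly : ∀ x, (f - t • twoCycle a) x =
      if x = a ∨ x = drev a then f x - t else f x := by
    intro x
    by_cases hxa : x = a
    · subst hxa; simp [twoCycle, hne]
    · by_cases hxa' : x = drev a
      · subst hxa'; simp [twoCycle, hne.symm]
      · simp [twoCycle, hxa, hxa']
  refine isFlow_iff.2 ⟨fun x hx => ?_, fun x hx => ?_, fun u => ?_⟩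
  · have := hf.1 x hx
    rw [happly]
    split_ifs with hx' <;> [rcases hx' with rfl | rfl; skip] <;> constructor <;> linarith
  · have := hf.2.1 x hx
    rw [happly]
    split_ifs with hx' <;> [rcases hx' with rfl | rfl; skip] <;> linarith
  · rw [map_sub, map_smul, netOutflow_twoCycle ha ha', smul_zero, sub_zero]
    exact hf.netOutflow_eq u

lemma IsMinCostFlow.of_subset (hf : IsMinCostFlow E D d w f) (h : D' ⊆ D)
    (hf' : IsFlow E D' d f) : IsMinCostFlow E D' d w f :=
  ⟨hf', fun g hg => hf.2 g (hg.mono h)⟩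

lemma IsMinCostFlow.le_flowCost_of_isFlow_padd (hw : ∀ e ∈ E, 0 < w e)
    (hf : IsMinCostFlow E D d w f) {a : V × V} (ha : a ∈ E) (ha' : drev a ∈ E)
    (hne : a ≠ drev a) (hfa : f a = 1) (hg : IsFlow E (padd D a) d g) :
    flowCost E w f ≤ flowCost E w g := by
  have haD : a ∈ D := by
    by_contra h
    simp [hf.1.2.1 a h] at hfa
  by_cases hra : drev a ∈ D
  · have hpadd : padd D a = D := union_eq_left.2 (by simp [insert_subset_iff, haD, hra])
    exact hf.2 g (hpadd ▸ hg)
  by_contra! hlt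
  set m := (1 / 2 : ℝ) • f + (1 / 2 : ℝ) • g with hm_def
  have hm : IsFlow E (padd D a) d m :=
    convex_setOf_isFlow (hf.1.mono subset_union_left) hg (by norm_num) (by norm_num) (by norm_num)
  have hfra : f (drev a) = 0 := hf.1.2.1 _ hra
  have hma : m a = (1 + g a) / 2 := by simp [hm_def, hfa]; ring
  have hmra : m (drev a) = g (drev a) / 2 := by simp [hm_def, hfra]; ring
  have hga := hg.1 a ha
  have hgra := hg.1 _ ha'
  set t := m (drev a)
  have ht : 0 ≤ t := by rw [hmra]; linarith
  have hcancel : IsFlow E (padd D a) d (m - t • twoCycle a) :=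
    hm.sub_smul_twoCycle ha ha' hne ht (by rw [hma, hmra]; linarith) le_rfl
  have hcancelD : IsFlow E D d (m - t • twoCycle a) := by
    refine hcancel.restrict fun x hx hxD => ?_
    obtain rfl : x = drev a := by
      simp only [padd, mem_union, mem_insert, mem_singleton] at hx
      rcases hx with hx | rfl | rfl
      exacts [absurd hx hxD, absurd haD hxD, rfl]
    simp [twoCycle, hne.symm, t]
  have hle := hf.2 _ hcancelD
  rw [flowCost_sub, flowCost_smul, flowCost_twoCycle ha ha', hm_def, flowCost_add,
    flowCost_smul, flowCost_smul] at hle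
  nlinarith [mul_nonneg ht (add_pos (hw a ha) (hw _ ha')).le]

end Flows

section Psi

variable [Fintype V] {E : Finset (V × V)} {d : V → ℤ} {w : V × V → ℝ}
  {A : Finset (V × V) → Finset (V × V)}

lemma AEq.symm {D D' : Finset (V × V)} (h : AEq E d A D D') : AEq E d A D' D :=
  ⟨h.2.1, h.1, h.2.2.symm⟩

lemma GoodA.eq_of_isMinCostFlow (hA : GoodA E d w A) {S T : Finset (V × V)} (hS : S ⊆ E)
    (hT : IsMinCostFlow E S d w (ind T)) : A S = T :=
  ind_injective ((hA S hS ⟨_, hT.1⟩).2 _ hT).symm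

theorem aEq_padd_or_aEq_psub (hE_symm : ∀ e, e ∈ E ↔ drev e ∈ E)
    (hE_ne : ∀ e ∈ E, e.1 ≠ e.2) (hw : ∀ e ∈ E, 0 < w e) (hA : GoodA E d w A)
    {D : Finset (V × V)} (hD : D ⊆ E) (hDf : AdmitsFlow E D d) {e : V × V} (he : e ∈ E) :
    AEq E d A D (padd D e) ∨ AEq E d A D (psub D e) := by
  have hmin := (hA D hD hDf).1
  set f := ind (A D)
  have he' : drev e ∈ E := (hE_symm e).1 he
  have hne : e ≠ drev e := ne_drev_of_fst_ne_snd (hE_ne e he)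
  by_cases hused : f e = 1 ∨ f (drev e) = 1
  · have hpaddE : padd D e ⊆ E := union_subset hD (by simp [insert_subset_iff, he, he'])
    have hpadd : IsFlow E (padd D e) d f := hmin.1.mono subset_union_left
    have hle (g : V × V → ℝ) (hg : IsFlow E (padd D e) d g) :
        flowCost E w f ≤ flowCost E w g := by
      rcases hused with h | h
      · exact hmin.le_flowCost_of_isFlow_padd hw he he' hne h hg
      · exact hmin.le_flowCost_of_isFlow_padd hw he' he hne.symm h (by rwa [padd_drev])
    exact .inl ⟨hDf, ⟨f, hpadd⟩, (hA.eq_of_isMinCostFlow hpaddE ⟨hpadd, hle⟩).symm⟩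
  · push Not at hused
    have hpsub : IsFlow E (psub D e) d f := by
      refine hmin.1.restrict fun x hx hx' => ?_
      obtain rfl | rfl : x = e ∨ x = drev e := by simp [psub, hx] at hx'; tauto
      exacts [(ind_eq_zero_or_eq_one _ _).resolve_right hused.1,
        (ind_eq_zero_or_eq_one _ _).resolve_right hused.2]
    exact .inr ⟨hDf, ⟨f, hpsub⟩, (hA.eq_of_isMinCostFlow (sdiff_subset.trans hD)
      (hmin.of_subset sdiff_subset hpsub)).symm⟩

lemma psiE_spec (E' : Finset (V × V)) {D : Finset (V × V)} {e : V × V}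
    (h : AEq E d A D (padd D e) ∨ AEq E d A D (psub D e)) :
    (psiE E d A E' e D = padd D e ∧ AEq E d A D (padd D e)) ∨
      (psiE E d A E' e D = psub D e ∧ AEq E d A D (psub D e)) := by
  unfold psiE
  split_ifs <;> tauto

end Psi

end

theorem psiE_well_defined_general
    {V : Type*} [Fintype V] [DecidableEq V]
    (E : Finset (V × V)) (hE_symm : ∀ e, e ∈ E ↔ drev e ∈ E)
    (hE_ne : ∀ e ∈ E, e.1 ≠ e.2)
    (d : V → ℤ)
    (w : V × V → ℝ) (hw : ∀ e ∈ E, 0 < w e)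
    (A : Finset (V × V) → Finset (V × V)) (hA : GoodA E d w A)
    (E' : Finset (V × V))
    (D : Finset (V × V)) (hD : D ⊆ E) (hDf : AdmitsFlow E D d)
    (e : V × V) (he : e ∈ E) :
    ¬ (¬ AEq E d A D (padd D e) ∧ ¬ AEq E d A D (psub D e)) ∧
    AEq E d A (psiE E d A E' e D) D ∧
    (e ∈ psiE E d A E' e D ↔ drev e ∈ psiE E d A E' e D) ∧
    psub (psiE E d A E' e D) e = psub D e := by
  have hkey := aEq_padd_or_aEq_psub hE_symm hE_ne hw hA hD hDf he
  rcases psiE_spec E' hkey with ⟨hψ, hAeq⟩ | ⟨hψ, hAeq⟩ <;> rw [hψ]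
  · exact ⟨by tauto, hAeq.symm, by simp [padd], psub_padd D e⟩
  · exact ⟨by tauto, hAeq.symm, by simp [psub], psub_psub D e⟩

theorem psiE_well_defined
    {V : Type*} [Fintype V] [DecidableEq V]
    (E : Finset (V × V)) (hE_symm : ∀ e, e ∈ E ↔ drev e ∈ E)
    (hE_ne : ∀ e ∈ E, e.1 ≠ e.2)
    (d : V → ℤ) (hd : ∑ u : V, d u = 0)
    (w : V × V → ℝ) (hw : ∀ e ∈ E, 0 < w e)
    (A : Finset (V × V) → Finset (V × V)) (hA : GoodA E d w A)
    (E' : Finset (V × V)) (hE' : IsOrientation E E')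
    (D : Finset (V × V)) (hD : D ⊆ E) (hDf : AdmitsFlow E D d)
    (e : V × V) (he : e ∈ E) :
    ¬ (¬ AEq E d A D (padd D e) ∧ ¬ AEq E d A D (psub D e)) ∧
    AEq E d A (psiE E d A E' e D) D ∧
    (e ∈ psiE E d A E' e D ↔ drev e ∈ psiE E d A E' e D) ∧
    psub (psiE E d A E' e D) e = psub D e :=
  psiE_well_defined_general E hE_symm hE_ne d w hw A hA E' D hD hDf e he
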